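/- Let f : ℝ → ℝ be a convex function with f(0) ≤ 0, let A be an n×n Hermitian complex matrix, and let Z be an n×n complex matrix which is a contraction (operator norm at most 1). Set X = f(Zᴴ A Z) and Y = Zᴴ f(A) Z. Then there exist n×n unitary matrices U and V such that X ≤ (U Y Uᴴ + V Y Vᴴ)/2 in the Loewner order. -/

import Mathlib

open Matrix
open scoped ComplexOrder

/-- The `j`-th largest eigenvalue of a Hermitian matrix (`0`-indexed, so `eigDesc hA ⟨0, _⟩`
is the largest), counted with multiplicity. -/
noncomputable def eigDesc {n : ℕ} {A : Matrix (Fin n) (Fin n) ℂ} (hA : A.IsHermitian)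
    (j : Fin n) : ℝ :=
  hA.eigenvalues (Tuple.sort hA.eigenvalues j.rev)

/-- Applying a real function to a Hermitian matrix via the functional calculus yields a
Hermitian matrix. -/
lemma isHermitian_cfc {n : ℕ} {A : Matrix (Fin n) (Fin n) ℂ} (hA : A.IsHermitian)
    (f : ℝ → ℝ) : (hA.cfc f).IsHermitian := by
  rw [← hA.cfc_eq]
  exact cfc_predicate f A

lemma isHermitian_half_smul {n : ℕ} {X : Matrix (Fin n) (Fin n) ℂ} (hX : X.IsHermitian) :
    ((2 : ℝ)⁻¹ • X).IsHermitian := by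
  show _ = _
  rw [Matrix.conjTranspose_smul, star_trivial, hX.eq]

lemma isHermitian_sum_conj {m n : ℕ} {A : Fin m → Matrix (Fin n) (Fin n) ℂ}
    (Z : Fin m → Matrix (Fin n) (Fin n) ℂ) (hA : ∀ i, (A i).IsHermitian) :
    (∑ i, (Z i)ᴴ * A i * Z i).IsHermitian := by
  show _ = _
  rw [Matrix.conjTranspose_sum]
  exact Finset.sum_congr rfl fun i _ => (isHermitian_conjTranspose_mul_mul (Z i) (hA i)).eq

/-!
With `C = Zᴴ A Z` and `Y = Zᴴ f(A) Z`, Jensen's inequality in an eigenbasis of `A`, with the mass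
`1 - ‖Z x‖²` missing from the weights put at `0` (where `f 0 ≤ 0`), gives `f ⟨x, C x⟩ ≤ ⟨x, Y x⟩`
for unit vectors `x`.

Let `a` minimise `f` on an interval containing the spectrum of `C`, so that `f` is antitone to the
left of `a` and monotone to the right, and let `S` be `1` on the eigenvectors of `C` with eigenvalue
`≥ a` and `-1` on the others. Split a vector `x` in the span of the eigenvectors with `f(λᵢ) ≥ c`
accordingly as `x₊ + x₋`; then `S x = x₊ - x₋`, so `⟨x, M x⟩ = ⟨x₊, Y x₊⟩ + ⟨x₋, Y x₋⟩` for
`M = (Y + S Y S) / 2`. The Rayleigh quotient of `C` at `x₊` is an average of eigenvalues in the set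
of `t ≥ a` of the interval with `f t ≥ c`, which is convex, so `⟨x₊, Y x₊⟩ ≥ c ‖x₊‖²`; likewise for
`x₋`.

By min-max, `M` has at least as many eigenvalues `≥ c` as `f(C)` for every `c`, so the sorted
eigenvalues of `M` dominate those of `f(C)` and `f(C) ≤ W M Wᴴ` for a unitary `W`: take `U = W` and
`V = W S`.
-/

open Finset

section Convexity

variable {f : ℝ → ℝ}

lemma ConvexOn.monotoneOn_inter_Ici_of_isMinOn {s : Set ℝ} {a : ℝ} (hf : ConvexOn ℝ s f)
    (has : a ∈ s) (ha : IsMinOn f s a) : MonotoneOn f (s ∩ Set.Ici a) :=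
  fun _ hx _ hy hxy =>
    (hf.le_max_of_mem_Icc has hy.1 ⟨hx.2, hxy⟩).trans (max_le (ha hy.1) le_rfl)

lemma ConvexOn.antitoneOn_inter_Iic_of_isMinOn {s : Set ℝ} {a : ℝ} (hf : ConvexOn ℝ s f)
    (has : a ∈ s) (ha : IsMinOn f s a) : AntitoneOn f (s ∩ Set.Iic a) :=
  fun _ hx _ hy hxy =>
    (hf.le_max_of_mem_Icc hx.1 has ⟨hxy, hy.2⟩).trans (max_le le_rfl (ha hx.1))

lemma ConvexOn.exists_antitoneOn_monotoneOn {lo hi : ℝ} (hf : ConvexOn ℝ Set.univ f)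
    (h : lo ≤ hi) :
    ∃ a, AntitoneOn f (Set.Icc lo a) ∧ MonotoneOn f (Set.Icc a hi) := by
  obtain ⟨a, ha, hmin⟩ := isCompact_Icc.exists_isMinOn (Set.nonempty_Icc.2 h)
    ((hf.continuousOn isOpen_univ).mono (Set.subset_univ _))
  have hf' := hf.subset (Set.subset_univ _) (convex_Icc lo hi)
  refine ⟨a, ?_, ?_⟩
  · exact (hf'.antitoneOn_inter_Iic_of_isMinOn ha hmin).mono
      fun x hx => ⟨⟨hx.1, hx.2.trans ha.2⟩, hx.2⟩
  · exact (hf'.monotoneOn_inter_Ici_of_isMinOn ha hmin).mono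
      fun x hx => ⟨⟨ha.1.trans hx.1, hx.2⟩, hx.1⟩

lemma ConvexOn.mul_map_inv_mul_sum_le {ι : Type*} {t : Finset ι} (hf : ConvexOn ℝ Set.univ f)
    (hf0 : f 0 ≤ 0) {w p : ι → ℝ} {T : ℝ} (hT : 0 < T) (hw0 : ∀ i ∈ t, 0 ≤ w i)
    (hw : ∑ i ∈ t, w i ≤ T) :
    T * f (T⁻¹ * ∑ i ∈ t, w i * p i) ≤ ∑ i ∈ t, w i * f (p i) := by
  have hJ := hf.map_add_sum_le (t := t) (w := fun i => T⁻¹ * w i) (p := p) (q := 0)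
    (v := 1 - ∑ i ∈ t, T⁻¹ * w i) (fun i hi => mul_nonneg (inv_nonneg.2 hT.le) (hw0 i hi))
    (by ring) (fun _ _ => Set.mem_univ _)
    (by rw [← mul_sum, sub_nonneg]; exact inv_mul_le_one_of_le₀ hw hT.le) (Set.mem_univ _)
  simp only [smul_eq_mul, mul_zero, zero_add, mul_assoc, ← mul_sum] at hJ
  calc T * f (T⁻¹ * ∑ i ∈ t, w i * p i)
      ≤ T * ((1 - T⁻¹ * ∑ i ∈ t, w i) * f 0 + T⁻¹ * ∑ i ∈ t, w i * f (p i)) :=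
        mul_le_mul_of_nonneg_left hJ hT.le
    _ ≤ ∑ i ∈ t, w i * f (p i) := by
        have : 0 ≤ 1 - T⁻¹ * ∑ i ∈ t, w i := by
          rw [sub_nonneg]; exact inv_mul_le_one_of_le₀ hw hT.le
        rw [mul_add, ← mul_assoc T T⁻¹, mul_inv_cancel₀ hT.ne', one_mul]
        nlinarith [mul_nonpos_of_nonneg_of_nonpos this hf0]

end Convexity

section Majorization

lemma Monotone.le_of_forall_card_le {ι α : Type*} [Fintype ι] [LinearOrder ι] [LinearOrder α]
    {u v : ι → α} (hu : Monotone u) (hv : Monotone v)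
    (h : ∀ c, #{i | c ≤ u i} ≤ #{i | c ≤ v i}) (j : ι) : u j ≤ v j := by
  by_contra! hlt
  have h₁ : ({i | j ≤ i} : Finset ι) ⊆ ({i | u j ≤ u i} : Finset ι) := fun i hi => by
    simp only [mem_filter, mem_univ, true_and] at hi ⊢
    exact hu hi
  have h₂ : ({i | u j ≤ v i} : Finset ι) ⊆ ({i | j < i} : Finset ι) := fun i hi => by
    simp only [mem_filter, mem_univ, true_and, ← not_le] at hi ⊢
    exact fun hij => (hi.trans (hv hij)).not_gt hlt
  have h₃ : ({i | j < i} : Finset ι) ⊂ ({i | j ≤ i} : Finset ι) :=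
    (Finset.ssubset_iff_of_subset (monotone_filter_right _ fun _ _ => le_of_lt)).2
      ⟨j, by simp, by simp⟩
  exact ((card_le_card h₁).trans ((h _).trans (card_le_card h₂))).not_gt (card_lt_card h₃)

lemma exists_perm_le_of_forall_card_le {n : ℕ} {α : Type*} [LinearOrder α] {β γ : Fin n → α}
    (h : ∀ c, #{i | c ≤ β i} ≤ #{i | c ≤ γ i}) : ∃ σ : Equiv.Perm (Fin n), ∀ i, β i ≤ γ (σ i) := by
  have hcard (u : Fin n → α) (τ : Equiv.Perm (Fin n)) (c : α) :
      #{i | c ≤ (u ∘ τ) i} = #{i | c ≤ u i} :=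
    card_equiv τ (by simp)
  have hle := (Tuple.monotone_sort β).le_of_forall_card_le (Tuple.monotone_sort γ)
    fun c => by rw [hcard, hcard]; exact h c
  exact ⟨Tuple.sort γ * (Tuple.sort β)⁻¹, fun i => by simpa using hle ((Tuple.sort β)⁻¹ i)⟩

variable {ι : Type*} [Fintype ι] [DecidableEq ι]

lemma Matrix.submatrix_id_mem_unitaryGroup {T : Matrix ι ι ℂ} (hT : T ∈ unitaryGroup ι ℂ)
    (σ : ι ≃ ι) : T.submatrix id σ ∈ unitaryGroup ι ℂ := by
  rw [mem_unitaryGroup_iff, star_eq_conjTranspose, conjTranspose_submatrix, submatrix_mul_equiv,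
    ← star_eq_conjTranspose, mem_unitaryGroup_iff.mp hT, submatrix_id_id]

lemma Matrix.mul_diagonal_mul_conjTranspose_eq_submatrix (T : Matrix ι ι ℂ) (g : ι → ℂ)
    (σ : ι ≃ ι) :
    T * diagonal g * Tᴴ = T.submatrix id σ * diagonal (g ∘ σ) * (T.submatrix id σ)ᴴ := by
  rw [conjTranspose_submatrix, ← submatrix_diagonal_equiv, submatrix_mul_equiv,
    submatrix_mul_equiv, submatrix_id_id]

lemma exists_unitary_conj_sub_posSemidef_of_le {R T : Matrix ι ι ℂ} (hR : R ∈ unitaryGroup ι ℂ)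
    (hT : T ∈ unitaryGroup ι ℂ) {β γ : ι → ℝ} (h : ∀ i, β i ≤ γ i) :
    ∃ W ∈ unitaryGroup ι ℂ, (W * (T * diagonal (Complex.ofReal ∘ γ) * Tᴴ) * Wᴴ -
      R * diagonal (Complex.ofReal ∘ β) * Rᴴ).PosSemidef := by
  refine ⟨R * Tᴴ, mul_mem hR (Unitary.star_mem hT), ?_⟩
  have hTT : Tᴴ * T = 1 := mem_unitaryGroup_iff'.mp hT
  have hconj : R * Tᴴ * (T * diagonal (Complex.ofReal ∘ γ) * Tᴴ) * (R * Tᴴ)ᴴ =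
      R * diagonal (Complex.ofReal ∘ γ) * Rᴴ := by
    simp only [conjTranspose_mul, conjTranspose_conjTranspose, Matrix.mul_assoc]
    rw [← Matrix.mul_assoc Tᴴ T, hTT, Matrix.one_mul, ← Matrix.mul_assoc Tᴴ T, hTT,
      Matrix.one_mul]
  rw [hconj, ← Matrix.sub_mul, ← Matrix.mul_sub, diagonal_sub]
  refine PosSemidef.mul_mul_conjTranspose_same (posSemidef_diagonal_iff.2 fun i => ?_) R
  simpa [← Complex.ofReal_sub] using h i

lemma exists_unitary_conj_sub_posSemidef_of_forall_card_le {n : ℕ}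
    {R M : Matrix (Fin n) (Fin n) ℂ} (hR : R ∈ unitaryGroup (Fin n) ℂ) (hM : M.IsHermitian)
    {β : Fin n → ℝ} (h : ∀ c, #{i | c ≤ β i} ≤ #{i | c ≤ hM.eigenvalues i}) :
    ∃ W ∈ unitaryGroup (Fin n) ℂ,
      (W * M * Wᴴ - R * diagonal (Complex.ofReal ∘ β) * Rᴴ).PosSemidef := by
  obtain ⟨σ, hσ⟩ := exists_perm_le_of_forall_card_le h
  have hMd : M = (hM.eigenvectorUnitary : Matrix (Fin n) (Fin n) ℂ) *
      diagonal (Complex.ofReal ∘ hM.eigenvalues) * (hM.eigenvectorUnitary : Matrix _ _ ℂ)ᴴ :=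
    hM.spectral_theorem
  rw [hMd, mul_diagonal_mul_conjTranspose_eq_submatrix _ _ σ]
  exact exists_unitary_conj_sub_posSemidef_of_le hR
    (submatrix_id_mem_unitaryGroup hM.eigenvectorUnitary.2 σ) hσ

end Majorization

section QuadraticForm

variable {ι : Type*} [Fintype ι]

lemma dotProduct_conjTranspose_mul_mul_mulVec (N M : Matrix ι ι ℂ) (x : ι → ℂ) :
    star x ⬝ᵥ ((Nᴴ * M * N) *ᵥ x) = star (N *ᵥ x) ⬝ᵥ (M *ᵥ (N *ᵥ x)) := by
  rw [← mulVec_mulVec, ← mulVec_mulVec, dotProduct_mulVec, star_mulVec]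

lemma re_dotProduct_self (z : ι → ℂ) : (star z ⬝ᵥ z).re = ∑ i, Complex.normSq (z i) := by
  simp only [dotProduct, Pi.star_apply, Complex.re_sum]
  refine sum_congr rfl fun i _ => ?_
  simp [Complex.normSq_apply]

lemma re_dotProduct_half_smul_add_conj_mulVec (Y S : Matrix ι ι ℂ) {u v : ι → ℂ}
    (hS : Sᴴ *ᵥ (u + v) = u - v) :
    (star (u + v) ⬝ᵥ (((2 : ℝ)⁻¹ • (Y + S * Y * Sᴴ)) *ᵥ (u + v))).re =
      (star u ⬝ᵥ (Y *ᵥ u)).re + (star v ⬝ᵥ (Y *ᵥ v)).re := by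
  have hconj := dotProduct_conjTranspose_mul_mul_mulVec Sᴴ Y (u + v)
  rw [conjTranspose_conjTranspose, hS] at hconj
  rw [smul_mulVec, dotProduct_smul, add_mulVec, dotProduct_add, hconj]
  simp only [mulVec_add, mulVec_sub, star_add, star_sub, add_dotProduct, sub_dotProduct,
    dotProduct_add, dotProduct_sub, Complex.real_smul, Complex.re_ofReal_mul, Complex.add_re,
    Complex.sub_re]
  ring

/-- `f ⟨x, C x⟩ ≤ ⟨x, Y x⟩` for all unit vectors `x`, in homogeneous form. -/
def JensenBound (f : ℝ → ℝ) (C Y : Matrix ι ι ℂ) : Prop :=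
  ∀ x : ι → ℂ, 0 < ∑ i, Complex.normSq (x i) →
    (∑ i, Complex.normSq (x i)) *
        f ((∑ i, Complex.normSq (x i))⁻¹ * (star x ⬝ᵥ (C *ᵥ x)).re) ≤
      (star x ⬝ᵥ (Y *ᵥ x)).re

/-- For unitary `Q`, the span of the columns of `Q` indexed by `s`. -/
def coordSubspace (Q : Matrix ι ι ℂ) (s : Finset ι) : Submodule ℂ (ι → ℂ) where
  carrier := {x | ∀ i ∉ s, (Qᴴ *ᵥ x) i = 0}
  add_mem' hx hy i hi := by simp [mulVec_add, hx i hi, hy i hi]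
  zero_mem' i _ := by simp
  smul_mem' c x hx i hi := by simp [mulVec_smul, hx i hi]

variable [DecidableEq ι]

lemma re_dotProduct_diagonal_mulVec (v : ι → ℝ) (z : ι → ℂ) :
    (star z ⬝ᵥ (diagonal (Complex.ofReal ∘ v) *ᵥ z)).re = ∑ i, v i * Complex.normSq (z i) := by
  simp only [dotProduct, mulVec_diagonal, Function.comp_apply, Pi.star_apply, Complex.re_sum]
  refine sum_congr rfl fun i _ => ?_
  rw [Complex.star_def, ← mul_assoc, mul_comm _ (v i : ℂ), mul_assoc, Complex.re_ofReal_mul,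
    mul_comm (starRingEnd ℂ _), Complex.mul_conj, Complex.ofReal_re]

lemma re_dotProduct_conj_diagonal_mulVec (Q : Matrix ι ι ℂ) (v : ι → ℝ) (x : ι → ℂ) :
    (star x ⬝ᵥ ((Q * diagonal (Complex.ofReal ∘ v) * Qᴴ) *ᵥ x)).re =
      ∑ i, v i * Complex.normSq ((Qᴴ *ᵥ x) i) := by
  have h := dotProduct_conjTranspose_mul_mul_mulVec Qᴴ (diagonal (Complex.ofReal ∘ v)) x
  rw [conjTranspose_conjTranspose] at h
  rw [h, re_dotProduct_diagonal_mulVec]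

lemma sum_normSq_mulVec_of_mem_unitaryGroup {Q : Matrix ι ι ℂ}
    (hQ : Q ∈ unitaryGroup ι ℂ) (z : ι → ℂ) :
    ∑ i, Complex.normSq ((Q *ᵥ z) i) = ∑ i, Complex.normSq (z i) := by
  rw [← re_dotProduct_self, ← re_dotProduct_self, star_mulVec, ← dotProduct_mulVec,
    mulVec_mulVec, ← star_eq_conjTranspose, mem_unitaryGroup_iff'.mp hQ, one_mulVec]

lemma sum_normSq_mulVec_le_of_posSemidef {Z : Matrix ι ι ℂ} (hZ : (1 - Zᴴ * Z).PosSemidef)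
    (x : ι → ℂ) : ∑ i, Complex.normSq ((Z *ᵥ x) i) ≤ ∑ i, Complex.normSq (x i) := by
  have h := hZ.dotProduct_mulVec_nonneg x
  rw [sub_mulVec, one_mulVec, dotProduct_sub, ← mul_one Zᴴ,
    dotProduct_conjTranspose_mul_mul_mulVec, one_mulVec] at h
  simpa [← re_dotProduct_self] using Complex.nonneg_iff.mp h |>.1

lemma card_le_finrank_coordSubspace {Q : Matrix ι ι ℂ} (hQ : Q ∈ unitaryGroup ι ℂ)
    (s : Finset ι) : #s ≤ Module.finrank ℂ (coordSubspace Q s) := by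
  have hli : LinearIndependent ℂ (fun i : s => Q.col i) :=
    (linearIndependent_cols_iff_isUnit.2 (Unitary.isUnit_coe (U := ⟨Q, hQ⟩))).comp _
      Subtype.val_injective
  have hspan : Submodule.span ℂ (Set.range fun i : s => Q.col i) ≤ coordSubspace Q s := by
    rw [Submodule.span_le]
    rintro _ ⟨i, rfl⟩ j hj
    dsimp only
    rw [← mulVec_single_one, mulVec_mulVec, ← star_eq_conjTranspose,
      mem_unitaryGroup_iff'.mp hQ, one_mulVec, Pi.single_apply, if_neg (by grind)]
  simpa using (finrank_span_eq_card hli).symm.le.trans (Submodule.finrank_mono hspan)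

namespace Matrix.IsHermitian

variable {B : Matrix ι ι ℂ} (hB : B.IsHermitian)

lemma cfc_eq_mul_diagonal_mul (g : ℝ → ℝ) :
    hB.cfc g = (hB.eigenvectorUnitary : Matrix ι ι ℂ) *
      diagonal (Complex.ofReal ∘ g ∘ hB.eigenvalues) * (hB.eigenvectorUnitary : Matrix ι ι ℂ)ᴴ :=
  rfl

lemma isHermitian_cfc (g : ℝ → ℝ) : (hB.cfc g).IsHermitian := by
  rw [← hB.cfc_eq]
  exact cfc_predicate g B

lemma cfc_mulVec (g : ℝ → ℝ) (x : ι → ℂ) :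
    hB.cfc g *ᵥ x = (hB.eigenvectorUnitary : Matrix ι ι ℂ) *ᵥ
      fun i => (g (hB.eigenvalues i) : ℂ) * (((hB.eigenvectorUnitary : Matrix ι ι ℂ)ᴴ *ᵥ x) i) := by
  rw [cfc_eq_mul_diagonal_mul, ← mulVec_mulVec, ← mulVec_mulVec]
  congr 1
  funext i
  exact mulVec_diagonal _ _ i

lemma cfc_mem_unitaryGroup {g : ℝ → ℝ} (hg : ∀ r, g r ^ 2 = 1) :
    hB.cfc g ∈ unitaryGroup ι ℂ := by
  set U : Matrix ι ι ℂ := ↑hB.eigenvectorUnitary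
  have hU : U ∈ unitaryGroup ι ℂ := hB.eigenvectorUnitary.2
  have hD : diagonal (Complex.ofReal ∘ g ∘ hB.eigenvalues) *
      star (diagonal (Complex.ofReal ∘ g ∘ hB.eigenvalues)) = 1 := by
    rw [star_eq_conjTranspose, diagonal_conjTranspose, diagonal_mul_diagonal, ← diagonal_one]
    congr 1
    funext i
    simp [← Complex.ofReal_pow, ← sq, hg]
  rw [mem_unitaryGroup_iff, cfc_eq_mul_diagonal_mul, star_mul, star_mul, star_eq_conjTranspose U,
    star_eq_conjTranspose Uᴴ, conjTranspose_conjTranspose]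
  simp only [Matrix.mul_assoc]
  rw [← Matrix.mul_assoc Uᴴ U, ← star_eq_conjTranspose, mem_unitaryGroup_iff'.mp hU,
    Matrix.one_mul, ← Matrix.mul_assoc _ (star _), hD, Matrix.one_mul]
  exact mem_unitaryGroup_iff.mp hU

lemma re_dotProduct_cfc_mulVec (g : ℝ → ℝ) (x : ι → ℂ) :
    (star x ⬝ᵥ (hB.cfc g *ᵥ x)).re = ∑ i, g (hB.eigenvalues i) *
      Complex.normSq (((hB.eigenvectorUnitary : Matrix ι ι ℂ)ᴴ *ᵥ x) i) :=
  re_dotProduct_conj_diagonal_mulVec _ (g ∘ hB.eigenvalues) x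

lemma re_dotProduct_mulVec (x : ι → ℂ) :
    (star x ⬝ᵥ (B *ᵥ x)).re = ∑ i, hB.eigenvalues i *
      Complex.normSq (((hB.eigenvectorUnitary : Matrix ι ι ℂ)ᴴ *ᵥ x) i) := by
  conv_lhs => rw [show B = hB.cfc id from hB.spectral_theorem]
  exact hB.re_dotProduct_cfc_mulVec id x

lemma finrank_le_card_eigenvalues_ge {c : ℝ} {V : Submodule ℂ (ι → ℂ)}
    (hV : ∀ x ∈ V, c * ∑ i, Complex.normSq (x i) ≤ (star x ⬝ᵥ (B *ᵥ x)).re) :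
    Module.finrank ℂ V ≤ #{i | c ≤ hB.eigenvalues i} := by
  set U : Matrix ι ι ℂ := ↑hB.eigenvectorUnitary
  have hU : Uᴴ ∈ unitaryGroup ι ℂ := Unitary.star_mem hB.eigenvectorUnitary.2
  let coords : V →ₗ[ℂ] ({i // c ≤ hB.eigenvalues i} → ℂ) :=
    LinearMap.funLeft ℂ ℂ Subtype.val ∘ₗ mulVecLin Uᴴ ∘ₗ V.subtype
  suffices Function.Injective coords by
    simpa [Fintype.card_subtype] using LinearMap.finrank_le_finrank_of_injective this
  rw [← LinearMap.ker_eq_bot, Submodule.eq_bot_iff]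
  rintro ⟨x, hxV⟩ hx
  have hz : ∀ i, c ≤ hB.eigenvalues i → (Uᴴ *ᵥ x) i = 0 := fun i hi => congrFun hx ⟨i, hi⟩
  by_contra hx0
  obtain ⟨i₀, hi₀⟩ : ∃ i, (Uᴴ *ᵥ x) i ≠ 0 := by
    by_contra! h
    refine hx0 (Subtype.ext (?_ : x = 0))
    rw [← one_mulVec x, ← mem_unitaryGroup_iff'.mp hU, star_eq_conjTranspose,
      conjTranspose_conjTranspose, ← mulVec_mulVec, funext h]
    exact mulVec_zero U
  have hlt : ∑ i, hB.eigenvalues i * Complex.normSq ((Uᴴ *ᵥ x) i) <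
      ∑ i, c * Complex.normSq ((Uᴴ *ᵥ x) i) := by
    refine sum_lt_sum (fun i _ => ?_) ⟨i₀, mem_univ _, ?_⟩
    · rcases le_or_gt c (hB.eigenvalues i) with h | h
      · simp [hz i h]
      · exact mul_le_mul_of_nonneg_right h.le (Complex.normSq_nonneg _)
    · exact mul_lt_mul_of_pos_right (not_le.1 fun h => hi₀ (hz i₀ h))
        (Complex.normSq_pos.2 hi₀)
  have := hV x hxV
  rw [hB.re_dotProduct_mulVec, ← sum_normSq_mulVec_of_mem_unitaryGroup hU, mul_sum] at this
  exact this.not_gt hlt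

end Matrix.IsHermitian

variable {f : ℝ → ℝ} {C Y : Matrix ι ι ℂ}

lemma jensenBound_conj_cfc (hf : ConvexOn ℝ Set.univ f) (hf0 : f 0 ≤ 0)
    {A : Matrix ι ι ℂ} (hA : A.IsHermitian) {Z : Matrix ι ι ℂ} (hZ : (1 - Zᴴ * Z).PosSemidef) :
    JensenBound f (Zᴴ * A * Z) (Zᴴ * hA.cfc f * Z) := by
  intro x hx
  rw [dotProduct_conjTranspose_mul_mul_mulVec, dotProduct_conjTranspose_mul_mul_mulVec,
    hA.re_dotProduct_mulVec, hA.re_dotProduct_cfc_mulVec]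
  simp_rw [mul_comm _ (Complex.normSq _)]
  refine hf.mul_map_inv_mul_sum_le hf0 hx (fun i _ => Complex.normSq_nonneg _) ?_
  have hU : (hA.eigenvectorUnitary : Matrix ι ι ℂ)ᴴ ∈ unitaryGroup ι ℂ :=
    Unitary.star_mem hA.eigenvectorUnitary.2
  rw [sum_normSq_mulVec_of_mem_unitaryGroup hU]
  exact sum_normSq_mulVec_le_of_posSemidef hZ x

lemma JensenBound.mul_sum_normSq_le (hJ : JensenBound f C Y) (hC : C.IsHermitian)
    {K : Set ℝ} (hK : Convex ℝ K) {c : ℝ} (hKc : ∀ r ∈ K, c ≤ f r) {z : ι → ℂ}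
    (hz : ∀ i, z i ≠ 0 → hC.eigenvalues i ∈ K) :
    c * ∑ i, Complex.normSq (z i) ≤
      (star ((hC.eigenvectorUnitary : Matrix ι ι ℂ) *ᵥ z) ⬝ᵥ
        (Y *ᵥ ((hC.eigenvectorUnitary : Matrix ι ι ℂ) *ᵥ z))).re := by
  set U : Matrix ι ι ℂ := ↑hC.eigenvectorUnitary
  have hU : U ∈ unitaryGroup ι ℂ := hC.eigenvectorUnitary.2
  set t := ∑ i, Complex.normSq (z i)
  rcases (sum_nonneg fun i _ => Complex.normSq_nonneg (z i)).eq_or_lt with ht | ht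
  · have hz0 : z = 0 := funext fun i => Complex.normSq_eq_zero.1 <|
      (sum_eq_zero_iff_of_nonneg fun i _ => Complex.normSq_nonneg _).1 ht.symm i (mem_univ i)
    simp [t, hz0]
  have hmem : t⁻¹ * ∑ i, hC.eigenvalues i * Complex.normSq (z i) ∈ K := by
    have := hK.centerMass_mem (t := {i | Complex.normSq (z i) ≠ 0})
      (fun i _ => Complex.normSq_nonneg (z i)) (by rwa [sum_filter_ne_zero])
      (fun i hi => hz i (by simpa using hi))
    rw [centerMass_filter_ne_zero, centerMass] at this
    simpa [mul_comm] using this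
  have hJx := hJ (U *ᵥ z) (by rwa [sum_normSq_mulVec_of_mem_unitaryGroup hU])
  rw [sum_normSq_mulVec_of_mem_unitaryGroup hU, hC.re_dotProduct_mulVec, mulVec_mulVec,
    ← star_eq_conjTranspose, mem_unitaryGroup_iff'.mp hU, one_mulVec] at hJx
  rw [mul_comm]
  exact (mul_le_mul_of_nonneg_left (hKc _ hmem) ht.le).trans hJx

theorem JensenBound.mul_sum_normSq_le_mean_conj (hJ : JensenBound f C Y) (hC : C.IsHermitian)
    {a lo hi : ℝ} (hanti : AntitoneOn f (Set.Icc lo a)) (hmono : MonotoneOn f (Set.Icc a hi))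
    (hd : ∀ i, hC.eigenvalues i ∈ Set.Icc lo hi) {c : ℝ} {z : ι → ℂ}
    (hz : ∀ i, z i ≠ 0 → c ≤ f (hC.eigenvalues i)) :
    let U : Matrix ι ι ℂ := hC.eigenvectorUnitary
    let S := hC.cfc fun r => if a ≤ r then 1 else -1
    c * ∑ i, Complex.normSq (z i) ≤
      (star (U *ᵥ z) ⬝ᵥ (((2 : ℝ)⁻¹ • (Y + S * Y * Sᴴ)) *ᵥ (U *ᵥ z))).re := by
  intro U S
  have hU : U ∈ unitaryGroup ι ℂ := hC.eigenvectorUnitary.2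
  set d := hC.eigenvalues
  set zp : ι → ℂ := fun i => if a ≤ d i then z i else 0
  set zm : ι → ℂ := fun i => if a ≤ d i then 0 else z i
  have hsplit : U *ᵥ z = U *ᵥ zp + U *ᵥ zm := by
    rw [← mulVec_add]
    congr 1
    funext i
    by_cases h : a ≤ d i <;> simp [zp, zm, h]
  have hS : Sᴴ *ᵥ (U *ᵥ zp + U *ᵥ zm) = U *ᵥ zp - U *ᵥ zm := by
    rw [(hC.isHermitian_cfc _).eq, ← hsplit, hC.cfc_mulVec, mulVec_mulVec, ← star_eq_conjTranspose,
      mem_unitaryGroup_iff'.mp hU, one_mulVec, ← mulVec_sub]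
    congr 1
    funext i
    by_cases h : a ≤ d i <;> simp [zp, zm, h, d]
  have hnorm : ∑ i, Complex.normSq (z i) =
      ∑ i, Complex.normSq (zp i) + ∑ i, Complex.normSq (zm i) := by
    rw [← sum_add_distrib]
    refine sum_congr rfl fun i _ => ?_
    by_cases h : a ≤ d i <;> simp [zp, zm, h]
  have hp := hJ.mul_sum_normSq_le hC ((hmono.convex_ge (convex_Icc a hi)) c)
    (fun r hr => hr.2) (z := zp) fun i hi => by
      by_cases h : a ≤ d i <;> simp only [zp, h, if_true, if_false, ne_eq, not_true] at hi
      exact ⟨⟨h, (hd i).2⟩, hz i hi⟩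
  have hm := hJ.mul_sum_normSq_le hC ((hanti.convex_ge (convex_Icc lo a)) c)
    (fun r hr => hr.2) (z := zm) fun i hi => by
      by_cases h : a ≤ d i <;> simp only [zm, h, if_true, if_false, ne_eq, not_true] at hi
      exact ⟨⟨(hd i).1, (not_le.1 h).le⟩, hz i hi⟩
  rw [hsplit, re_dotProduct_half_smul_add_conj_mulVec Y S hS, hnorm, mul_add]
  exact add_le_add hp hm

theorem JensenBound.exists_unitary_mul_sum_normSq_le (hJ : JensenBound f C Y)
    (hC : C.IsHermitian) (hf : ConvexOn ℝ Set.univ f) :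
    ∃ S ∈ unitaryGroup ι ℂ, ∀ c, ∀ x ∈ coordSubspace (hC.eigenvectorUnitary : Matrix ι ι ℂ)
      {i | c ≤ f (hC.eigenvalues i)}, c * ∑ i, Complex.normSq (x i) ≤
        (star x ⬝ᵥ (((2 : ℝ)⁻¹ • (Y + S * Y * Sᴴ)) *ᵥ x)).re := by
  set U : Matrix ι ι ℂ := ↑hC.eigenvectorUnitary
  have hU : U ∈ unitaryGroup ι ℂ := hC.eigenvectorUnitary.2
  set R := ∑ i, |hC.eigenvalues i|
  have hd : ∀ i, hC.eigenvalues i ∈ Set.Icc (-R) R := fun i =>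
    abs_le.1 (single_le_sum (fun j _ => abs_nonneg (hC.eigenvalues j)) (mem_univ i))
  obtain ⟨a, hanti, hmono⟩ := hf.exists_antitoneOn_monotoneOn
    (neg_le_self (sum_nonneg fun i _ => abs_nonneg (hC.eigenvalues i)) : -R ≤ R)
  refine ⟨hC.cfc fun r => if a ≤ r then 1 else -1,
    hC.cfc_mem_unitaryGroup fun r => by split_ifs <;> norm_num, fun c x hx => ?_⟩
  have hUx := hJ.mul_sum_normSq_le_mean_conj hC hanti hmono hd (z := Uᴴ *ᵥ x)
    fun i hi => by_contra fun h => hi (hx i (by simpa using h))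
  dsimp only at hUx
  rwa [mulVec_mulVec, ← star_eq_conjTranspose, mem_unitaryGroup_iff.mp hU, one_mulVec,
    sum_normSq_mulVec_of_mem_unitaryGroup (Unitary.star_mem hU)] at hUx

end QuadraticForm

theorem cfc_contraction_le_mean_unitary_conj
    {n : ℕ} (f : ℝ → ℝ) (hf : ConvexOn ℝ Set.univ f) (hf0 : f 0 ≤ 0)
    (A : Matrix (Fin n) (Fin n) ℂ) (hA : A.IsHermitian)
    (Z : Matrix (Fin n) (Fin n) ℂ) (hZ : (1 - Zᴴ * Z).PosSemidef) :
    ∃ U V : Matrix (Fin n) (Fin n) ℂ,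
      U ∈ Matrix.unitaryGroup (Fin n) ℂ ∧ V ∈ Matrix.unitaryGroup (Fin n) ℂ ∧
      ((2 : ℝ)⁻¹ • (U * (Zᴴ * hA.cfc f * Z) * Uᴴ + V * (Zᴴ * hA.cfc f * Z) * Vᴴ) -
        (isHermitian_conjTranspose_mul_mul Z hA).cfc f).PosSemidef := by
  set hC := isHermitian_conjTranspose_mul_mul Z hA
  set Y := Zᴴ * hA.cfc f * Z
  obtain ⟨S, hS, hSY⟩ :=
    (jensenBound_conj_cfc hf hf0 hA hZ).exists_unitary_mul_sum_normSq_le hC hf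
  have hY : Y.IsHermitian := isHermitian_conjTranspose_mul_mul Z (isHermitian_cfc hA f)
  have hM : ((2 : ℝ)⁻¹ • (Y + S * Y * Sᴴ)).IsHermitian :=
    isHermitian_half_smul (hY.add (isHermitian_mul_mul_conjTranspose S hY))
  obtain ⟨W, hW, hWM⟩ := exists_unitary_conj_sub_posSemidef_of_forall_card_le
    hC.eigenvectorUnitary.2 hM (β := f ∘ hC.eigenvalues)
    fun c => (card_le_finrank_coordSubspace hC.eigenvectorUnitary.2 _).trans
      (hM.finrank_le_card_eigenvalues_ge (hSY c))
  refine ⟨W, W * S, hW, mul_mem hW hS, ?_⟩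
  rw [hC.cfc_eq_mul_diagonal_mul]
  convert hWM using 2
  simp only [Matrix.mul_smul, Matrix.smul_mul, conjTranspose_mul, Matrix.mul_add,
    Matrix.add_mul, Matrix.mul_assoc]
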